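/- arXiv:math/0510212 — 5 statements merged into one kernel-verified Lean document; each statement's English description precedes it below -/
import Mathlib

section
/- For b ∈ [0,1] and a positive integer n, define b_n = max(b, ⌈(n-1)b⌉/n). Then b = b_n if and only if the fractional part {nb} ≤ b. -/
/-- Lemma 1.1(1): for `b ∈ [0,1]` and `n ≥ 1`, with
`bₙ = max(b, ⌈(n-1)b⌉/n)`, one has `b = bₙ ↔ {nb} ≤ b`. -/
theorem stmt0 (b : ℝ) (hb : b ∈ Set.Icc (0:ℝ) 1) (n : ℕ) (hn : 1 ≤ n) :
    b = max b ((⌈((n:ℝ) - 1) * b⌉ : ℝ) / n) ↔ Int.fract ((n:ℝ) * b) ≤ b := by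
  have hnpos : (0:ℝ) < n := by exact_mod_cast hn
  rw [eq_comm, max_eq_left_iff, div_le_iff₀ hnpos, Int.fract]
  have h1 : (⌈((n:ℝ) - 1) * b⌉ : ℝ) ≤ b * n ↔ ((n:ℝ)-1) * b ≤ ⌊(n:ℝ)*b⌋ := by
    rw [show b * (n:ℝ) = (n:ℝ) * b by ring]
    constructor
    · intro h
      exact_mod_cast (Int.ceil_le).mp (Int.le_floor.mpr (by exact_mod_cast h))
    · intro h
      exact_mod_cast (Int.floor_le ((n:ℝ)*b)).trans' (by exact_mod_cast Int.ceil_le.mpr h)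
  rw [h1]
  constructor <;> intro h <;> linarith
end

section
/- For b ∈ [0,1] and integer n ≥ 1, define b_k = max(b, ⌈(k-1)b⌉/k) for each positive integer k. Then ⌊b⌋ + ⌈(n-1)·b_{n-1}⌉ ≤ n·b_n (where for n = 1 the term ⌈0·b_0⌉ is interpreted as 0). -/
/-- Lemma 1.1(3): with `b_k = max(b, ⌈(k-1)b⌉/k)`,
`⌊b⌋ + ⌈(n-1)·b_{n-1}⌉ ≤ n·b_n` for `n ≥ 1`
(for `n = 1` the factor `(n-1)` makes the middle term `⌈0⌉ = 0`). -/
theorem stmt2 (b : ℝ) (hb : b ∈ Set.Icc (0:ℝ) 1) (n : ℕ) (hn : 1 ≤ n)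
    (bk : ℕ → ℝ) (hbk : ∀ k : ℕ, bk k = max b ((⌈((k:ℝ) - 1) * b⌉ : ℝ) / k)) :
    ((⌊b⌋ : ℝ) + (⌈((n:ℝ) - 1) * bk (n - 1)⌉ : ℝ)) ≤ (n : ℝ) * bk n := by
  obtain ⟨hb0, hb1⟩ := hb
  rcases eq_or_lt_of_le hb1 with hb1 | hb1
  · -- b = 1
    subst hb1
    have hone : ∀ k : ℕ, bk k = 1 := by
      intro k
      rw [hbk, mul_one]
      rcases Nat.eq_zero_or_pos k with hk | hk
      · subst hk
        norm_num
      · have h1 : (⌈((k:ℝ) - 1)⌉ : ℝ) = (k:ℝ) - 1 := by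
          rw [show ((k:ℝ) - 1) = (((k:ℤ) - 1 : ℤ) : ℝ) by push_cast; ring,
            Int.ceil_intCast]
        rw [h1]
        have hk' : (0:ℝ) < k := by exact_mod_cast hk
        rw [max_eq_left]
        rw [div_le_one hk']
        linarith
    rw [hone, hone, mul_one, mul_one]
    have h1 : (⌈((n:ℝ) - 1)⌉ : ℝ) = (n:ℝ) - 1 := by
      rw [show ((n:ℝ) - 1) = (((n:ℤ) - 1 : ℤ) : ℝ) by push_cast; ring,
        Int.ceil_intCast]
    rw [h1]
    norm_num
  · -- b < 1
    have hfloor : ⌊b⌋ = 0 := Int.floor_eq_zero_iff.mpr ⟨hb0, hb1⟩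
    rcases eq_or_lt_of_le hn with hn1 | hn2
    · subst hn1
      simp only [Nat.cast_one, sub_self, zero_mul, Int.ceil_zero, hfloor, hbk]
      norm_num
    · have hn2 : 2 ≤ n := hn2
      have hnR : (2:ℝ) ≤ n := by exact_mod_cast hn2
      -- n * bk n ≥ ⌈(n-1)b⌉
      have hc : (⌈((n:ℝ) - 1) * b⌉ : ℝ) ≤ (n : ℝ) * bk n := by
        rw [hbk]
        have h := le_max_right b ((⌈((n:ℝ) - 1) * b⌉ : ℝ) / n)
        have hn0 : (0:ℝ) < n := by linarith
        calc (⌈((n:ℝ) - 1) * b⌉ : ℝ) = n * ((⌈((n:ℝ) - 1) * b⌉ : ℝ) / n) := by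
              field_simp
          _ ≤ n * max b ((⌈((n:ℝ) - 1) * b⌉ : ℝ) / n) := by
              exact mul_le_mul_of_nonneg_left h (le_of_lt hn0)
      have hcast : ((n - 1 : ℕ) : ℝ) = (n:ℝ) - 1 := by
        rw [Nat.cast_sub hn]; norm_num
      have hkey : (⌈((n:ℝ) - 1) * bk (n - 1)⌉ : ℤ) ≤ ⌈((n:ℝ) - 1) * b⌉ := by
        rw [hbk, hcast]
        rcases max_choice b ((⌈((n:ℝ) - 1 - 1) * b⌉ : ℝ) / ((n:ℝ) - 1)) with h | h
        · rw [h]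
        · rw [h]
          have hne : (n:ℝ) - 1 ≠ 0 := by linarith
          rw [mul_div_cancel₀ _ hne, Int.ceil_intCast]
          apply Int.ceil_le_ceil
          apply mul_le_mul_of_nonneg_right _ hb0
          linarith
      have hkeyR : (⌈((n:ℝ) - 1) * bk (n - 1)⌉ : ℝ) ≤ (⌈((n:ℝ) - 1) * b⌉ : ℝ) := by
        exact_mod_cast hkey
      rw [hfloor]
      push_cast
      linarith
end

section
/- Let a, c, d, γ be real numbers with a > -1, a - γc ≥ -1 and γ > 0. If n is an integer with n ≥ 1 + γ⁻¹, then ⌊⌈a + c + nd⌉/n⌋ ≤ ⌈a + d⌉. -/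
/-- Lemma 1.3: if `a > -1`, `a - γc ≥ -1`, `γ > 0` and `n` is an integer
with `n ≥ 1 + γ⁻¹`, then `⌊⌈a + c + nd⌉/n⌋ ≤ ⌈a + d⌉`. -/
theorem stmt4 (a c d γ : ℝ) (ha : -1 < a) (hac : -1 ≤ a - γ * c) (hγ : 0 < γ)
    (n : ℤ) (hn : 1 + γ⁻¹ ≤ (n : ℝ)) :
    ⌊((⌈a + c + (n : ℝ) * d⌉ : ℝ)) / (n : ℝ)⌋ ≤ ⌈a + d⌉ := by
  have hγi : 0 < γ⁻¹ := inv_pos.mpr hγ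
  have hn0 : (0 : ℝ) < (n : ℝ) := by linarith
  set m := ⌈a + d⌉ with hm
  have hmd : a + d ≤ (m : ℝ) := Int.le_ceil _
  have hγn : 1 ≤ γ * ((n : ℝ) - 1) := by
    have := mul_le_mul_of_nonneg_left hn hγ.le
    rw [mul_add, mul_inv_cancel₀ hγ.ne'] at this
    nlinarith
  have hc : c ≤ ((n : ℝ) - 1) * (a + 1) := by
    have h1 : γ * c ≤ a + 1 := by linarith
    nlinarith [mul_le_mul_of_nonneg_right hγn (by linarith : (0:ℝ) ≤ a + 1)]
  have hkey : a + c + (n : ℝ) * d ≤ (((m + 1) * n - 1 : ℤ) : ℝ) := by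
    push_cast
    nlinarith [mul_le_mul_of_nonneg_left (by linarith : d ≤ (m : ℝ) - a) hn0.le]
  have hceil : ⌈a + c + (n : ℝ) * d⌉ ≤ (m + 1) * n - 1 := Int.ceil_le.mpr hkey
  have hlt : ((⌈a + c + (n : ℝ) * d⌉ : ℝ)) / (n : ℝ) < (m : ℝ) + 1 := by
    rw [div_lt_iff₀ hn0]
    have h2 : ((⌈a + c + (n : ℝ) * d⌉ : ℝ)) ≤ (((m + 1) * n - 1 : ℤ) : ℝ) := by
      exact_mod_cast hceil
    push_cast at h2
    nlinarith
  have hfl : ⌊((⌈a + c + (n : ℝ) * d⌉ : ℝ)) / (n : ℝ)⌋ < m + 1 := by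
    rw [Int.floor_lt]
    push_cast
    exact hlt
  omega
end

section
/- Let b ∈ [0,1] be a real number. Then b is rational if and only if ⌈(n-1)b⌉ ≤ ⌊nb⌋ for all sufficiently large and divisible integers n (i.e., there exists a positive integer m such that ⌈(n-1)b⌉ ≤ ⌊nb⌋ for every n that is a positive multiple of m). -/
/-!
Since `⌈x - b⌉ ≤ ⌊x⌋` says exactly that `fract x ≤ b`, the condition asks that
`fract (n b) ≤ b` for all positive multiples `n` of `m`. If `b = p / q` this holds with
`m = q`, as then `n b` is an integer. If `b` is irrational, so is `c = m b`, and by Dirichlet's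
approximation theorem some `k c` lies within `1 - b` of an integer `j`. If `k c < j` then
`fract (k c) > b` already; if `k c > j`, the fractional parts of `t k c` increase in steps of
`k c - j < 1 - b`, so one of them lands in `(b, 1)`.
-/

theorem Int.ceil_sub_le_floor_iff {α : Type*} [Ring α] [LinearOrder α] [IsStrictOrderedRing α]
    [FloorRing α] (x b : α) : ⌈x - b⌉ ≤ ⌊x⌋ ↔ Int.fract x ≤ b := by
  rw [Int.ceil_le, Int.fract, sub_le_comm]

theorem Rat.fract_den_mul_nat_mul {K : Type*} [Field K] [LinearOrder K] [IsStrictOrderedRing K]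
    [FloorRing K] (q : ℚ) (t : ℕ) : Int.fract (((q.den * t : ℕ) : K) * q) = 0 := by
  have h : ((q.den * t : ℕ) : K) * q = ((q.num * t : ℤ) : K) := by
    have := congrArg (fun r : ℚ => ((r * t : ℚ) : K)) q.den_mul_eq_num
    push_cast at this ⊢
    linear_combination this
  rw [h, Int.fract_intCast]

theorem exists_nat_mul_mem_Ioc {K : Type*} [Field K] [LinearOrder K] [IsStrictOrderedRing K]
    [FloorSemiring K] {δ b : K} (hδ : 0 < δ) (hb : 0 ≤ b) :
    ∃ t : ℕ, 0 < t ∧ t * δ ∈ Set.Ioc b (b + δ) := by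
  refine ⟨⌊b / δ⌋₊ + 1, Nat.succ_pos _, ?_, ?_⟩
  · have := Nat.lt_floor_add_one (b / δ)
    rw [div_lt_iff₀ hδ] at this
    exact_mod_cast this
  · have := Nat.floor_le (div_nonneg hb hδ.le)
    rw [le_div_iff₀ hδ] at this
    push_cast
    linarith

theorem Irrational.exists_lt_fract_nat_mul {c : ℝ} (hc : Irrational c) {b : ℝ} (hb : b < 1) :
    ∃ k : ℕ, 0 < k ∧ b < Int.fract (k * c) := by
  rcases lt_or_ge b 0 with hb0 | hb0
  · exact ⟨1, one_pos, hb0.trans_le (Int.fract_nonneg _)⟩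
  obtain ⟨n, hn⟩ := exists_nat_one_div_lt (sub_pos.2 hb)
  obtain ⟨k, hk, -, hkc⟩ := Real.exists_nat_abs_mul_sub_round_le c n.succ_pos
  set j := round ((k : ℝ) * c)
  set δ := (k : ℝ) * c - j
  have hδb : |δ| < 1 - b := by
    have : 1 / ((n : ℝ) + 1 + 1) ≤ 1 / (n + 1) := by gcongr; linarith
    push_cast at hkc
    linarith
  have hδ0 : δ ≠ 0 := sub_ne_zero.2 ((hc.natCast_mul hk.ne').ne_int j)
  rcases hδ0.lt_or_gt with hneg | hpos
  · rw [abs_of_neg hneg] at hδb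
    have hfract : Int.fract ((k : ℝ) * c) = 1 + δ := by
      refine Int.fract_eq_iff.2 ⟨by linarith, by linarith, j - 1, ?_⟩
      push_cast
      ring
    exact ⟨k, hk, by rw [hfract]; linarith⟩
  · rw [abs_of_pos hpos] at hδb
    obtain ⟨t, ht, hbt, htb⟩ := exists_nat_mul_mem_Ioc hpos hb0
    have hfract : Int.fract (((t * k : ℕ) : ℝ) * c) = t * δ :=
      Int.fract_eq_iff.2 ⟨by positivity, by linarith, t * j, by push_cast; ring⟩
    exact ⟨t * k, Nat.mul_pos ht hk, hfract ▸ hbt⟩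

/-- `b ∈ [0,1]` is rational iff `⌈(n-1)b⌉ ≤ ⌊nb⌋` for all sufficiently
large and divisible integers `n`, i.e. there is a positive integer `m`
such that the inequality holds for every positive multiple `n` of `m`. -/
theorem stmt8 (b : ℝ) (hb : b ∈ Set.Icc (0:ℝ) 1) :
    (∃ q : ℚ, b = (q : ℝ)) ↔
      ∃ m : ℕ, 0 < m ∧ ∀ n : ℕ, 0 < n → m ∣ n →
        ⌈((n:ℝ) - 1) * b⌉ ≤ ⌊(n:ℝ) * b⌋ := by
  simp only [sub_one_mul, Int.ceil_sub_le_floor_iff]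
  constructor
  · rintro ⟨q, rfl⟩
    refine ⟨q.den, q.den_pos, fun n _ ⟨t, hn⟩ => ?_⟩
    rw [hn, Rat.fract_den_mul_nat_mul]
    exact hb.1
  · rintro ⟨m, hm, H⟩
    by_contra hrat
    have hirr : Irrational b := fun ⟨q, hq⟩ => hrat ⟨q, hq.symm⟩
    obtain ⟨k, hk, hlt⟩ :=
      (hirr.natCast_mul hm.ne').exists_lt_fract_nat_mul (hb.2.lt_of_ne hirr.ne_one)
    have := H (k * m) (Nat.mul_pos hk hm) (dvd_mul_left m k)
    rw [Nat.cast_mul, mul_assoc] at this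
    exact hlt.not_ge this
end

section
/- Let b ∈ [0,1] and γ > 0 be real numbers, and let n be a positive integer. Then there exists an integer e ≥ 1 + γ⁻¹ such that b_{ne} ≤ b_n, where b_m = max(b, ⌈(m-1)b⌉/m) for each positive integer m. -/
/-- Splitting the ceiling: `⌈(ne-1)b⌉ = e⌊nb⌋ + ⌈e·frac(nb) - b⌉`. -/
lemma stmt12_split (b : ℝ) (n e : ℕ) :
    (⌈(((n * e : ℕ) : ℝ) - 1) * b⌉ : ℤ) =
      (e : ℤ) * ⌊(n : ℝ) * b⌋ + ⌈(e : ℝ) * Int.fract ((n : ℝ) * b) - b⌉ := by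
  have h : (((n * e : ℕ) : ℝ) - 1) * b =
      (((e : ℤ) * ⌊(n : ℝ) * b⌋ : ℤ) : ℝ) + ((e : ℝ) * Int.fract ((n : ℝ) * b) - b) := by
    rw [Int.fract]
    push_cast
    ring
  rw [h, add_comm, Int.ceil_add_intCast, add_comm]

/-- For `b ∈ [0,1]`, `γ > 0` and `n ≥ 1` there exists an integer
`e ≥ 1 + γ⁻¹` with `b_{ne} ≤ b_n`, where `b_m = max(b, ⌈(m-1)b⌉/m)`. -/
theorem stmt12 (b : ℝ) (hb : b ∈ Set.Icc (0:ℝ) 1) (γ : ℝ) (hγ : 0 < γ)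
    (n : ℕ) (hn : 1 ≤ n) :
    ∃ e : ℕ, 1 + γ⁻¹ ≤ (e : ℝ) ∧
      max b ((⌈(((n * e : ℕ) : ℝ) - 1) * b⌉ : ℝ) / (n * e : ℕ)) ≤
        max b ((⌈((n:ℝ) - 1) * b⌉ : ℝ) / n) := by
  obtain ⟨hb0, hb1⟩ := hb
  set M : ℕ := ⌈1 + γ⁻¹⌉₊ with hMdef
  have hM1 : (1 : ℝ) + γ⁻¹ ≤ M := Nat.le_ceil _
  have h1γ : (1 : ℝ) ≤ 1 + γ⁻¹ := by
    have : 0 < γ⁻¹ := by positivity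
    linarith
  have hMpos : (1 : ℝ) ≤ (M : ℝ) := le_trans h1γ hM1
  set c := Int.fract ((n : ℝ) * b) with hcdef
  have hc0 : 0 ≤ c := Int.fract_nonneg _
  have hc1 : c < 1 := Int.fract_lt_one _
  have hnpos : (0 : ℝ) < n := by exact_mod_cast hn
  -- general fact: if `⌈e·c - b⌉ ≤ e·c` then `b_{ne} ≤ b`
  have key : ∀ e : ℕ, 1 ≤ e → ((⌈(e : ℝ) * c - b⌉ : ℝ) ≤ (e : ℝ) * c) →
      (⌈(((n * e : ℕ) : ℝ) - 1) * b⌉ : ℝ) / ((n * e : ℕ) : ℝ) ≤ b := by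
    intro e he hce
    have hepos : (0 : ℝ) < e := by exact_mod_cast he
    have hne : (0 : ℝ) < ((n * e : ℕ) : ℝ) := by positivity
    rw [div_le_iff₀ hne]
    have hs := stmt12_split b n e
    have hs' : (⌈(((n * e : ℕ) : ℝ) - 1) * b⌉ : ℝ) =
        (e : ℝ) * (⌊(n : ℝ) * b⌋ : ℝ) + (⌈(e : ℝ) * c - b⌉ : ℝ) := by
      exact_mod_cast congrArg (fun z : ℤ => (z : ℝ)) hs
    rw [hs']
    have hfl : ((⌊(n : ℝ) * b⌋ : ℝ)) = (n : ℝ) * b - c := by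
      rw [hcdef, Int.fract]; ring
    have : (e : ℝ) * ((n : ℝ) * b - c) + (e : ℝ) * c = b * ((n * e : ℕ) : ℝ) := by
      push_cast; ring
    nlinarith [hce]
  rcases le_or_gt c b with hcb | hbc
  · -- case frac(nb) ≤ b : b_{ne} ≤ b
    rcases eq_or_lt_of_le hc0 with hczero | hcpos
    · -- c = 0, take e = M
      refine ⟨M, hM1, ?_⟩
      have hM1' : (1 : ℕ) ≤ M := by exact_mod_cast (by exact_mod_cast hMpos : (1:ℝ) ≤ M)
      have h2 : (⌈(M : ℝ) * c - b⌉ : ℝ) ≤ (M : ℝ) * c := by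
        rw [← hczero]
        have : (⌈(M : ℝ) * 0 - b⌉ : ℤ) ≤ 0 := by
          apply Int.ceil_le.mpr; push_cast; linarith
        simpa using (by exact_mod_cast this : ((⌈(M : ℝ) * 0 - b⌉ : ℤ) : ℝ) ≤ 0)
      exact max_le (le_max_left _ _) (le_trans (key M hM1' h2) (le_max_left _ _))
    · -- 0 < c ≤ b, take e = ⌈M / c⌉₊
      refine ⟨⌈(M : ℝ) / c⌉₊, ?_, ?_⟩
      · have h1 : (M : ℝ) / c ≤ ⌈(M : ℝ) / c⌉₊ := Nat.le_ceil _
        have h2 : (M : ℝ) ≤ (M : ℝ) / c := by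
          rw [le_div_iff₀ hcpos]
          nlinarith
        linarith
      · set e : ℕ := ⌈(M : ℝ) / c⌉₊ with hedef
        have hMc0 : 0 ≤ (M : ℝ) / c := by positivity
        have hle : (M : ℝ) / c ≤ (e : ℝ) := Nat.le_ceil _
        have hlt : (e : ℝ) < (M : ℝ) / c + 1 := Nat.ceil_lt_add_one hMc0
        have hec1 : (M : ℝ) ≤ (e : ℝ) * c := (div_le_iff₀ hcpos).mp hle
        have hec2 : (e : ℝ) * c < (M : ℝ) + c := by
          have := mul_lt_mul_of_pos_right hlt hcpos
          rw [add_mul, one_mul, div_mul_cancel₀ _ (ne_of_gt hcpos)] at this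
          linarith
        have he1 : 1 ≤ e := by
          have h0 : (0:ℝ) ≤ (e:ℝ) := Nat.cast_nonneg _
          have : (1:ℝ) ≤ (e:ℝ) := by nlinarith
          exact_mod_cast this
        have hceil : (⌈(e : ℝ) * c - b⌉ : ℝ) ≤ (M : ℝ) := by
          have : (⌈(e : ℝ) * c - b⌉ : ℤ) ≤ (M : ℤ) := by
            apply Int.ceil_le.mpr
            push_cast
            linarith
          exact_mod_cast this
        exact max_le (le_max_left _ _)
          (le_trans (key e he1 (le_trans hceil hec1)) (le_max_left _ _))
  · -- case b < frac(nb) : b_n = (⌊nb⌋+1)/n and any e works; take e = M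
    refine ⟨M, hM1, ?_⟩
    have hM1' : (1 : ℕ) ≤ M := by exact_mod_cast (by exact_mod_cast hMpos : (1:ℝ) ≤ M)
    have hMe : (0 : ℝ) < (M : ℝ) := by linarith
    have hne : (0 : ℝ) < ((n * M : ℕ) : ℝ) := by positivity
    -- b_n : ⌈(n-1)b⌉ = ⌊nb⌋ + 1
    have hbn : (⌈((n : ℝ) - 1) * b⌉ : ℤ) = ⌊(n : ℝ) * b⌋ + 1 := by
      have h : ((n : ℝ) - 1) * b = ((⌊(n : ℝ) * b⌋ : ℤ) : ℝ) + (c - b) := by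
        rw [hcdef, Int.fract]; ring
      rw [h, add_comm, Int.ceil_add_intCast, add_comm]
      congr 1
      rw [Int.ceil_eq_iff]
      constructor
      · push_cast; linarith
      · push_cast; linarith
    -- b_{nM} : ⌈(nM-1)b⌉ ≤ M(⌊nb⌋+1)
    have hs := stmt12_split b n M
    have hupper : (⌈(((n * M : ℕ) : ℝ) - 1) * b⌉ : ℝ) ≤ (M : ℝ) * ((⌊(n : ℝ) * b⌋ : ℝ) + 1) := by
      have hc2 : (⌈(M : ℝ) * c - b⌉ : ℤ) ≤ (M : ℤ) := by
        apply Int.ceil_le.mpr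
        push_cast
        nlinarith
      have hc2' : ((⌈(M : ℝ) * c - b⌉ : ℤ) : ℝ) ≤ (M : ℝ) := by exact_mod_cast hc2
      have hs' : (⌈(((n * M : ℕ) : ℝ) - 1) * b⌉ : ℝ) =
          (M : ℝ) * (⌊(n : ℝ) * b⌋ : ℝ) + (⌈(M : ℝ) * c - b⌉ : ℝ) := by
        exact_mod_cast congrArg (fun z : ℤ => (z : ℝ)) hs
      rw [hs']
      linarith
    apply max_le (le_max_left _ _)
    apply le_trans _ (le_max_right _ _)
    rw [div_le_div_iff₀ hne hnpos]
    have hbn' : (⌈((n : ℝ) - 1) * b⌉ : ℝ) = (⌊(n : ℝ) * b⌋ : ℝ) + 1 := by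
      exact_mod_cast congrArg (fun z : ℤ => (z : ℝ)) hbn
    rw [hbn']
    calc (⌈(((n * M : ℕ) : ℝ) - 1) * b⌉ : ℝ) * (n : ℝ)
        ≤ (M : ℝ) * ((⌊(n : ℝ) * b⌋ : ℝ) + 1) * (n : ℝ) :=
          mul_le_mul_of_nonneg_right hupper (le_of_lt hnpos)
      _ = ((⌊(n : ℝ) * b⌋ : ℝ) + 1) * ((n * M : ℕ) : ℝ) := by push_cast; ring
end
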